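/- arXiv:2512.02573 — 2 statements merged into one kernel-verified Lean document; each statement's English description precedes it below -/
import Mathlib

section
/- Let M = 2L and suppose each 2×K block W_ℓ satisfies H_ℓ·G_ℓ(W_ℓ)·W_ℓ = diag(γ_{1,ℓ},...,γ_{K,ℓ}) with γ_{k,ℓ} ≠ 0. Define new blocks W'_ℓ = W_ℓ·diag(e^{-i arg γ_{1,ℓ}},...,e^{-i arg γ_{K,ℓ}}). Then the stacked matrix W' with row blocks W'_ℓ satisfies H·G(W')·W' = diag(Σ_ℓ |γ_{1,ℓ}|, ..., Σ_ℓ |γ_{K,ℓ}|), i.e., the per-block diagonal gains combine in phase to real positive values. -/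
open Complex Matrix

def pairIdx {L : ℕ} (ℓ : Fin L) (j : Fin 2) : Fin (2 * L) :=
  ⟨2 * ℓ.val + j.val, by omega⟩

/-- The pair (block) that the antenna `m` belongs to. -/
def blkOf {L : ℕ} (m : Fin (2 * L)) : Fin L :=
  ⟨m.val / 2, by omega⟩

/-- Bussgang gain matrix: diagonal with entries α_m + β_m · ‖m-th row of W‖². -/
noncomputable def bussgangGain {M K : ℕ} (α β : Fin M → ℂ)
    (W : Matrix (Fin M) (Fin K) ℂ) : Matrix (Fin M) (Fin M) ℂ :=
  Matrix.diagonal (fun m => α m + β m * (∑ k, Complex.normSq (W m k) : ℝ))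

/-
Multiplying a block on the right by a diagonal matrix of unimodular phases leaves its Bussgang
gain unchanged, since the gain only sees the row norms. Hence block `ℓ` of the rotated precoder
contributes `diag(γ_{k,ℓ} e^{-i arg γ_{k,ℓ}}) = diag(|γ_{k,ℓ}|)`. As `G(W')` is diagonal and its
`ℓ`-th block depends only on the rows of `W'_ℓ`, the product `H G(W') W'` is the sum of these
block contributions.
-/

theorem Complex.mul_exp_neg_arg_mul_I (z : ℂ) : z * exp (-arg z * I) = ‖z‖ := by
  conv_lhs => rw [← norm_mul_exp_arg_mul_I z]
  rw [mul_assoc, ← exp_add]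
  simp

theorem Complex.norm_exp_neg_ofReal_mul_I (r : ℝ) : ‖exp (-r * I)‖ = 1 := by
  simpa using norm_exp_ofReal_mul_I (-r)

theorem bussgangGain_mul_diagonal {M K : ℕ} (α β : Fin M → ℂ) (W : Matrix (Fin M) (Fin K) ℂ)
    (u : Fin K → ℂ) (hu : ∀ k, ‖u k‖ = 1) :
    bussgangGain α β (W * diagonal u) = bussgangGain α β W := by
  simp [bussgangGain, normSq_eq_norm_sq, hu]

theorem mul_bussgangGain_mul_diagonal_of_eq_diagonal {M K : ℕ} (A : Matrix (Fin K) (Fin M) ℂ)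
    (α β : Fin M → ℂ) (B : Matrix (Fin M) (Fin K) ℂ) (γ u : Fin K → ℂ) (hu : ∀ k, ‖u k‖ = 1)
    (h : A * bussgangGain α β B * B = diagonal γ) :
    A * bussgangGain α β (B * diagonal u) * (B * diagonal u) = diagonal fun k => γ k * u k := by
  rw [bussgangGain_mul_diagonal α β B u hu, ← Matrix.mul_assoc, h, diagonal_mul_diagonal]

theorem sum_pairIdx {L : ℕ} {A : Type*} [AddCommMonoid A] (f : Fin (2 * L) → A) :
    ∑ ℓ, ∑ j, f (pairIdx ℓ j) = ∑ m, f m := by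
  rw [← Fintype.sum_prod_type', ← (finProdFinEquiv.trans (finCongr (mul_comm L 2))).sum_comp]
  refine Finset.sum_congr rfl fun p _ => congrArg f (Fin.ext ?_)
  simp [pairIdx, add_comm]

theorem blkOf_pairIdx {L : ℕ} (ℓ : Fin L) (j : Fin 2) : blkOf (pairIdx ℓ j) = ℓ := by
  ext; simp only [blkOf, pairIdx]; omega

section Blocks

variable {L : ℕ} {ι κ R : Type*}

-- Reducible, so that the block hypothesis of `stmt_5`, written with `of`, rewrites blockwise goals.
abbrev blockCols (H : Matrix ι (Fin (2 * L)) R) (ℓ : Fin L) : Matrix ι (Fin 2) R :=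
  of fun k j => H k (pairIdx ℓ j)

abbrev blockRows (W : Matrix (Fin (2 * L)) κ R) (ℓ : Fin L) : Matrix (Fin 2) κ R :=
  of fun j k => W (pairIdx ℓ j) k

theorem mul_eq_sum_blockCols_mul_blockRows [NonUnitalNonAssocSemiring R]
    (H : Matrix ι (Fin (2 * L)) R) (W : Matrix (Fin (2 * L)) κ R) :
    H * W = ∑ ℓ, blockCols H ℓ * blockRows W ℓ := by
  ext k k'
  simp only [mul_apply, Matrix.sum_apply, ← sum_pairIdx]
  rfl

theorem blockCols_mul_diagonal [NonUnitalNonAssocSemiring R]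
    (H : Matrix ι (Fin (2 * L)) R) (d : Fin (2 * L) → R) (ℓ : Fin L) :
    blockCols (H * diagonal d) ℓ = blockCols H ℓ * diagonal fun j => d (pairIdx ℓ j) := by
  ext; simp [blockCols]

theorem blockRows_of_mul [Fintype κ] [DecidableEq κ] [NonUnitalNonAssocSemiring R]
    (W : Matrix (Fin (2 * L)) κ R) (u : Fin L → κ → R) (ℓ : Fin L) :
    blockRows (of fun m k => W m k * u (blkOf m) k) ℓ = blockRows W ℓ * diagonal (u ℓ) := by
  ext; simp [blockRows, blkOf_pairIdx]

theorem mul_bussgangGain_mul_eq_sum_blocks {K : ℕ} [Fintype ι] (H : Matrix ι (Fin (2 * L)) ℂ)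
    (α β : Fin (2 * L) → ℂ) (W : Matrix (Fin (2 * L)) (Fin K) ℂ) :
    H * bussgangGain α β W * W
      = ∑ ℓ, blockCols H ℓ * bussgangGain (fun j => α (pairIdx ℓ j)) (fun j => β (pairIdx ℓ j))
          (blockRows W ℓ) * blockRows W ℓ := by
  rw [mul_eq_sum_blockCols_mul_blockRows]
  simp only [bussgangGain, blockCols_mul_diagonal]
  rfl

end Blocks

theorem stmt_5_general (K L : ℕ) (α β : Fin (2 * L) → ℂ)
    (H : Matrix (Fin K) (Fin (2 * L)) ℂ) (W : Matrix (Fin (2 * L)) (Fin K) ℂ)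
    (γ : Fin K → Fin L → ℂ)
    (hblk : ∀ ℓ : Fin L,
      (Matrix.of fun k j => H k (pairIdx ℓ j))
          * bussgangGain (fun j => α (pairIdx ℓ j)) (fun j => β (pairIdx ℓ j))
              (Matrix.of fun j k => W (pairIdx ℓ j) k)
          * (Matrix.of fun j k => W (pairIdx ℓ j) k)
        = Matrix.diagonal (fun k => γ k ℓ)) :
    H * bussgangGain α β
          (Matrix.of fun m k => W m k * Complex.exp (-(Complex.arg (γ k (blkOf m))) * Complex.I))
        * (Matrix.of fun m k => W m k * Complex.exp (-(Complex.arg (γ k (blkOf m))) * Complex.I))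
      = Matrix.diagonal (fun k => ((∑ ℓ, ‖γ k ℓ‖ : ℝ) : ℂ)) := by
  rw [mul_bussgangGain_mul_eq_sum_blocks]
  simp only [blockRows_of_mul W fun ℓ k => exp (-arg (γ k ℓ) * I),
    mul_bussgangGain_mul_diagonal_of_eq_diagonal _ _ _ _ _ _
      (fun k => norm_exp_neg_ofReal_mul_I _) (hblk _),
    mul_exp_neg_arg_mul_I]
  push_cast
  rw [← Finset.sum_fn, ← diagonalAddMonoidHom_apply, map_sum]
  rfl

theorem stmt_5 (K L : ℕ) (α β : Fin (2 * L) → ℂ)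
    (H : Matrix (Fin K) (Fin (2 * L)) ℂ) (W : Matrix (Fin (2 * L)) (Fin K) ℂ)
    (γ : Fin K → Fin L → ℂ) (hγ : ∀ k ℓ, γ k ℓ ≠ 0)
    (hblk : ∀ ℓ : Fin L,
      (Matrix.of fun k j => H k (pairIdx ℓ j))
          * bussgangGain (fun j => α (pairIdx ℓ j)) (fun j => β (pairIdx ℓ j))
              (Matrix.of fun j k => W (pairIdx ℓ j) k)
          * (Matrix.of fun j k => W (pairIdx ℓ j) k)
        = Matrix.diagonal (fun k => γ k ℓ)) :
    H * bussgangGain α β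
          (Matrix.of fun m k => W m k * Complex.exp (-(Complex.arg (γ k (blkOf m))) * Complex.I))
        * (Matrix.of fun m k => W m k * Complex.exp (-(Complex.arg (γ k (blkOf m))) * Complex.I))
      = Matrix.diagonal (fun k => ((∑ ℓ, ‖γ k ℓ‖ : ℝ) : ℂ)) :=
  stmt_5_general K L α β H W γ hblk
end

section
/- In the 2×2 case, suppose the amplitudes |w_{mk}| ≥ 0 (with |w_{11}|, |w_{12}| > 0) satisfy the unimodularity conditions |h_{22}| · |α_2 + β_2(|w_{21}|² + |w_{22}|²)| · |w_{21}| = |h_{21}| · |α_1 + β_1(|w_{11}|² + |w_{12}|²)| · |w_{11}| and |h_{12}| · |α_2 + β_2(|w_{21}|² + |w_{22}|²)| · |w_{22}| = |h_{11}| · |α_1 + β_1(|w_{11}|² + |w_{12}|²)| · |w_{12}|, where all h_{km} ≠ 0 and the gain factors α_m + β_m(·) are nonzero. Then there exist phases φ_{mk} ∈ ℝ such that the matrix W with entries w_{mk} = |w_{mk}| e^{iφ_{mk}} satisfies H·G(W)·W = diag(γ_1, γ_2) for some γ_1, γ_2 ∈ ℂ, i.e., the off-diagonal interference terms vanish exactly.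 -/
open Complex Matrix

lemma normSq_ofReal_mul_exp_mul_I (r θ : ℝ) :
    Complex.normSq ((r : ℂ) * Complex.exp (θ * Complex.I)) = r ^ 2 := by
  rw [Complex.normSq_mul, ← Complex.sq_norm (Complex.exp _), Complex.norm_exp_ofReal_mul_I,
    Complex.normSq_ofReal, one_pow, mul_one, sq]

lemma exists_mul_add_mul_exp_eq_zero {a b : ℂ} {r s : ℝ} (hb : b ≠ 0) (hs : 0 ≤ s)
    (h : ‖b‖ * r = ‖a‖ * s) :
    ∃ θ : ℝ, a * s + b * (r * Complex.exp (θ * Complex.I)) = 0 := by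
  set c : ℂ := -(a * s) / b
  have hc : ‖c‖ = r := by
    rw [norm_div, norm_neg, norm_mul, Complex.norm_real, Real.norm_of_nonneg hs, ← h,
      mul_div_cancel_left₀ _ (norm_ne_zero_iff.mpr hb)]
  refine ⟨c.arg, ?_⟩
  rw [← hc, Complex.norm_mul_exp_arg_mul_I]
  simp only [c]
  field_simp
  ring

lemma mul_bussgangGain_mul_apply {M K : ℕ} (α β : Fin M → ℂ) (H : Matrix (Fin M) (Fin M) ℂ)
    (W : Matrix (Fin M) (Fin K) ℂ) (i : Fin M) (j : Fin K) :
    (H * bussgangGain α β W * W) i j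
      = ∑ m, H i m * (α m + β m * (∑ k, Complex.normSq (W m k) : ℝ)) * W m j := by
  rw [Matrix.mul_apply]
  simp only [bussgangGain, Matrix.mul_diagonal]

lemma Matrix.exists_eq_diagonal_of_fin_two {R : Type*} [Zero R] (A : Matrix (Fin 2) (Fin 2) R)
    (h₀₁ : A 0 1 = 0) (h₁₀ : A 1 0 = 0) : ∃ γ₁ γ₂ : R, A = Matrix.diagonal ![γ₁, γ₂] :=
  ⟨A 0 0, A 1 1, by ext i j; fin_cases i <;> fin_cases j <;> simp [h₀₁, h₁₀]⟩

theorem stmt_7_general (α β : Fin 2 → ℂ) (H : Matrix (Fin 2) (Fin 2) ℂ)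
    (ρ : Fin 2 → Fin 2 → ℝ)  -- amplitudes: ρ m k = |w_{(m+1)(k+1)}|
    (hρ : ∀ m k, 0 ≤ ρ m k)
    (hH : ∀ k m, H k m ≠ 0)
    -- the gain factors
    (g₁ g₂ : ℂ)
    (hg₁ : g₁ = α 0 + β 0 * (((ρ 0 0) ^ 2 + (ρ 0 1) ^ 2 : ℝ) : ℂ))
    (hg₂ : g₂ = α 1 + β 1 * (((ρ 1 0) ^ 2 + (ρ 1 1) ^ 2 : ℝ) : ℂ))
    (hg₂0 : g₂ ≠ 0)
    -- unimodularity conditions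
    (hr₁ : ‖H 1 1‖ * ‖g₂‖ * ρ 1 0
            = ‖H 1 0‖ * ‖g₁‖ * ρ 0 0)
    (hr₂ : ‖H 0 1‖ * ‖g₂‖ * ρ 1 1
            = ‖H 0 0‖ * ‖g₁‖ * ρ 0 1) :
    ∃ (φ : Fin 2 → Fin 2 → ℝ) (γ₁ γ₂ : ℂ),
      H * bussgangGain α β
            (Matrix.of fun m k => (ρ m k : ℂ) * Complex.exp (φ m k * Complex.I))
          * (Matrix.of fun m k => (ρ m k : ℂ) * Complex.exp (φ m k * Complex.I))
        = Matrix.diagonal ![γ₁, γ₂] := by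
  -- the first user keeps real weights; the second user's phases cancel the interference
  obtain ⟨θ₁, hθ₁⟩ := exists_mul_add_mul_exp_eq_zero (a := H 1 0 * g₁) (b := H 1 1 * g₂)
    (mul_ne_zero (hH 1 1) hg₂0) (hρ 0 0) (by rw [norm_mul, norm_mul]; exact hr₁)
  obtain ⟨θ₂, hθ₂⟩ := exists_mul_add_mul_exp_eq_zero (a := H 0 0 * g₁) (b := H 0 1 * g₂)
    (mul_ne_zero (hH 0 1) hg₂0) (hρ 0 1) (by rw [norm_mul, norm_mul]; exact hr₂)
  subst hg₁ hg₂
  push_cast at hθ₁ hθ₂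
  refine ⟨![![0, 0], ![θ₁, θ₂]], Matrix.exists_eq_diagonal_of_fin_two _ ?_ ?_⟩ <;>
    simp only [mul_bussgangGain_mul_apply, Fin.sum_univ_two, of_apply, cons_val', cons_val_zero,
      cons_val_one, cons_val_fin_one, normSq_ofReal_mul_exp_mul_I, ofReal_add, ofReal_pow,
      ofReal_zero, zero_mul, exp_zero, mul_one]
  · linear_combination hθ₂
  · linear_combination hθ₁

theorem stmt_7 (α β : Fin 2 → ℂ) (H : Matrix (Fin 2) (Fin 2) ℂ)
    (ρ : Fin 2 → Fin 2 → ℝ)  -- amplitudes: ρ m k = |w_{(m+1)(k+1)}|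
    (hρ : ∀ m k, 0 ≤ ρ m k) (hρ11 : 0 < ρ 0 0) (hρ12 : 0 < ρ 0 1)
    (hH : ∀ k m, H k m ≠ 0)
    -- the gain factors
    (g₁ g₂ : ℂ)
    (hg₁ : g₁ = α 0 + β 0 * (((ρ 0 0) ^ 2 + (ρ 0 1) ^ 2 : ℝ) : ℂ))
    (hg₂ : g₂ = α 1 + β 1 * (((ρ 1 0) ^ 2 + (ρ 1 1) ^ 2 : ℝ) : ℂ))
    (hg₁0 : g₁ ≠ 0) (hg₂0 : g₂ ≠ 0)
    -- unimodularity conditions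
    (hr₁ : ‖H 1 1‖ * ‖g₂‖ * ρ 1 0
            = ‖H 1 0‖ * ‖g₁‖ * ρ 0 0)
    (hr₂ : ‖H 0 1‖ * ‖g₂‖ * ρ 1 1
            = ‖H 0 0‖ * ‖g₁‖ * ρ 0 1) :
    ∃ (φ : Fin 2 → Fin 2 → ℝ) (γ₁ γ₂ : ℂ),
      H * bussgangGain α β
            (Matrix.of fun m k => (ρ m k : ℂ) * Complex.exp (φ m k * Complex.I))
          * (Matrix.of fun m k => (ρ m k : ℂ) * Complex.exp (φ m k * Complex.I))
        = Matrix.diagonal ![γ₁, γ₂] :=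
  stmt_7_general α β H ρ hρ hH g₁ g₂ hg₁ hg₂ hg₂0 hr₁ hr₂
end
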